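/- arXiv:2505.17765 — 2 statements merged into one kernel-verified Lean document; each statement's English description precedes it below -/
import Mathlib

section
/- Optimality certificate (Theorem 1, sufficiency direction): suppose α* ∈ ℝ^n satisfies −λα*_i ∈ dom ξ*_{y_i} for all i, set θ* = Σ_{i=1}^n α*_i φ(x_i), and suppose equality holds in the Fenchel–Young inequality for each i, i.e. ξ_{y_i}(⟨θ*, φ(x_i)⟩) + ξ*_{y_i}(−λα*_i) = −λα*_i · ⟨θ*, φ(x_i)⟩. Then P(θ*) = −D(α*), θ* minimizes P over ℝ^D, and α* minimizes D over the feasible set Ω = {α : −λα_i ∈ dom ξ*_{y_i} for all i}. -/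
open scoped RealInnerProductSpace BigOperators

/-- Fenchel conjugate of a function `g : ℝ → ℝ ∪ {+∞}` (encoded with values in `EReal`). -/
noncomputable def fenchelConj (g : ℝ → EReal) (v : ℝ) : EReal :=
  ⨆ u : ℝ, ((u * v : ℝ) : EReal) - g u

/-- Primal objective of the kernel machine. -/
noncomputable def primalObj {d D n : ℕ}
    (x : Fin n → (Fin d → ℝ)) (φ : (Fin d → ℝ) → EuclideanSpace ℝ (Fin D))
    (ξ : Fin n → ℝ → EReal) (lam : ℝ) (θ : EuclideanSpace ℝ (Fin D)) : EReal :=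
  ((((1:ℝ)/2) * ‖θ‖^2 : ℝ) : EReal)
    + (((1:ℝ)/lam : ℝ) : EReal) * ∑ i, ξ i ⟪θ, φ (x i)⟫

/-- Dual objective of the kernel machine. -/
noncomputable def dualObj {d D n : ℕ}
    (x : Fin n → (Fin d → ℝ)) (φ : (Fin d → ℝ) → EuclideanSpace ℝ (Fin D))
    (ξ : Fin n → ℝ → EReal) (lam : ℝ) (α : Fin n → ℝ) : EReal :=
  ((((1:ℝ)/2) * ∑ i, ∑ j, α i * ⟪φ (x i), φ (x j)⟫ * α j : ℝ) : EReal)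
    + (((1:ℝ)/lam : ℝ) : EReal) * ∑ i, fenchelConj (ξ i) (-(lam * α i))

/- Auxiliary lemmas -/

lemma ereal_coe_sum {ι : Type*} (s : Finset ι) (f : ι → ℝ) :
    ((∑ i ∈ s, f i : ℝ) : EReal) = ∑ i ∈ s, ((f i : ℝ) : EReal) := by
  induction s using Finset.cons_induction with
  | empty => simp
  | cons a s ha ih => rw [Finset.sum_cons, Finset.sum_cons, EReal.coe_add, ih]

lemma ereal_sum_ne_bot {ι : Type*} (s : Finset ι) (f : ι → EReal)
    (h : ∀ i ∈ s, f i ≠ ⊥) : ∑ i ∈ s, f i ≠ ⊥ := by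
  induction s using Finset.cons_induction with
  | empty => simp
  | cons a s ha ih =>
      rw [Finset.sum_cons]
      simp only [ne_eq, EReal.add_eq_bot_iff]
      push_neg
      exact ⟨h a (Finset.mem_cons_self _ _),
        ih fun i hi => h i (Finset.mem_cons_of_mem hi)⟩

lemma ereal_sum_eq_top {ι : Type*} (s : Finset ι) (f : ι → EReal)
    (h : ∀ i ∈ s, f i ≠ ⊥) {i₀ : ι} (hi₀ : i₀ ∈ s) (htop : f i₀ = ⊤) :
    ∑ i ∈ s, f i = ⊤ := by
  classical
  rw [← Finset.add_sum_erase s f hi₀, htop, EReal.top_add_of_ne_bot]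
  exact ereal_sum_ne_bot _ _ fun i hi => h i (Finset.mem_of_mem_erase hi)

lemma fenchelConj_ne_bot (g : ℝ → EReal) (hg : ∀ u, g u ≠ ⊥) (hp : ∃ u, g u ≠ ⊤) (v : ℝ) :
    fenchelConj g v ≠ ⊥ := by
  obtain ⟨u0, hu0⟩ := hp
  have h1 : ((u0 * v : ℝ) : EReal) - g u0 ≤ fenchelConj g v :=
    le_iSup (fun u => ((u * v : ℝ) : EReal) - g u) u0
  have hr : ((g u0).toReal : EReal) = g u0 := EReal.coe_toReal hu0 (hg u0)
  rw [← hr, ← EReal.coe_sub] at h1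
  intro hb
  rw [hb, le_bot_iff] at h1
  exact EReal.coe_ne_bot _ h1

lemma fenchelYoung_real (g : ℝ → EReal) {u v a b : ℝ}
    (ha : g u = (a : ℝ)) (hb : fenchelConj g v = (b : ℝ)) : u * v ≤ a + b := by
  have h1 : ((u * v : ℝ) : EReal) - g u ≤ fenchelConj g v :=
    le_iSup (fun u => ((u * v : ℝ) : EReal) - g u) u
  rw [ha, hb, ← EReal.coe_sub, EReal.coe_le_coe_iff] at h1
  linarith

/-- Optimality certificate (sufficiency): if α⋆ is dual feasible, θ⋆ = Σ αᵢ⋆ φ(xᵢ), and the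
Fenchel–Young inequality holds with equality for each i, then P(θ⋆) = -D(α⋆), θ⋆ minimizes
the primal objective and α⋆ minimizes the dual objective over the feasible set. -/
theorem optimality_certificate_sufficiency {d D n : ℕ}
    (x : Fin n → (Fin d → ℝ)) (φ : (Fin d → ℝ) → EuclideanSpace ℝ (Fin D))
    (ξ : Fin n → ℝ → EReal)
    (hξ_noBot : ∀ i u, ξ i u ≠ ⊥)
    (hξ_proper : ∀ i, ∃ u, ξ i u ≠ ⊤)
    (lam : ℝ) (hlam : 0 < lam)
    (αstar : Fin n → ℝ)
    (hfeas : ∀ i, fenchelConj (ξ i) (-(lam * αstar i)) < ⊤)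
    (θstar : EuclideanSpace ℝ (Fin D))
    (hθ : θstar = ∑ i, αstar i • φ (x i))
    (hFY : ∀ i, ξ i ⟪θstar, φ (x i)⟫ + fenchelConj (ξ i) (-(lam * αstar i))
        = (((-(lam * αstar i)) * ⟪θstar, φ (x i)⟫ : ℝ) : EReal)) :
    primalObj x φ ξ lam θstar = -dualObj x φ ξ lam αstar
    ∧ (∀ θ : EuclideanSpace ℝ (Fin D), primalObj x φ ξ lam θstar ≤ primalObj x φ ξ lam θ)
    ∧ (∀ α : Fin n → ℝ, (∀ i, fenchelConj (ξ i) (-(lam * α i)) < ⊤) →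
        dualObj x φ ξ lam αstar ≤ dualObj x φ ξ lam α) := by
  have hconj_ne_bot : ∀ (β : Fin n → ℝ) (i : Fin n),
      fenchelConj (ξ i) (-(lam * β i)) ≠ ⊥ :=
    fun β i => fenchelConj_ne_bot _ (hξ_noBot i) (hξ_proper i) _
  -- dual objective is real whenever feasible
  have hdual_eq : ∀ (α : Fin n → ℝ), (∀ i, fenchelConj (ξ i) (-(lam * α i)) < ⊤) →
      dualObj x φ ξ lam α
        = ((((1:ℝ)/2) * (∑ i, ∑ j, α i * ⟪φ (x i), φ (x j)⟫ * α j)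
            + ((1:ℝ)/lam) * ∑ i, (fenchelConj (ξ i) (-(lam * α i))).toReal : ℝ) : EReal) := by
    intro α hα
    unfold dualObj
    have : (∑ i, fenchelConj (ξ i) (-(lam * α i)))
        = ((∑ i, (fenchelConj (ξ i) (-(lam * α i))).toReal : ℝ) : EReal) := by
      rw [ereal_coe_sum]
      exact Finset.sum_congr rfl fun i _ =>
        (EReal.coe_toReal (hα i).ne (hconj_ne_bot α i)).symm
    rw [this, ← EReal.coe_mul, ← EReal.coe_add]
  -- primal objective is real when no loss term is ⊤
  have hprimal_eq : ∀ (θ : EuclideanSpace ℝ (Fin D)), (∀ i, ξ i ⟪θ, φ (x i)⟫ ≠ ⊤) →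
      primalObj x φ ξ lam θ
        = ((((1:ℝ)/2) * ‖θ‖^2
            + ((1:ℝ)/lam) * ∑ i, (ξ i ⟪θ, φ (x i)⟫).toReal : ℝ) : EReal) := by
    intro θ hθ'
    unfold primalObj
    have : (∑ i, ξ i ⟪θ, φ (x i)⟫)
        = ((∑ i, (ξ i ⟪θ, φ (x i)⟫).toReal : ℝ) : EReal) := by
      rw [ereal_coe_sum]
      exact Finset.sum_congr rfl fun i _ =>
        (EReal.coe_toReal (hθ' i) (hξ_noBot i _)).symm
    rw [this, ← EReal.coe_mul, ← EReal.coe_add]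
  -- the kernel quadratic form is the squared norm of Σ αᵢ φ(xᵢ)
  have hnorm : ∀ (α : Fin n → ℝ),
      ‖∑ i, α i • φ (x i)‖^2 = ∑ i, ∑ j, α i * ⟪φ (x i), φ (x j)⟫ * α j := by
    intro α
    rw [← real_inner_self_eq_norm_sq, sum_inner]
    refine Finset.sum_congr rfl fun i _ => ?_
    rw [inner_sum]
    refine Finset.sum_congr rfl fun j _ => ?_
    rw [real_inner_smul_left, real_inner_smul_right]
    ring
  have hip : ∀ (θ : EuclideanSpace ℝ (Fin D)) (α : Fin n → ℝ),
      ⟪θ, ∑ i, α i • φ (x i)⟫ = ∑ i, α i * ⟪θ, φ (x i)⟫ := by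
    intro θ α
    rw [inner_sum]
    exact Finset.sum_congr rfl fun i _ => real_inner_smul_right _ _ _
  -- weak duality
  have weak : ∀ (θ : EuclideanSpace ℝ (Fin D)) (α : Fin n → ℝ),
      (∀ i, fenchelConj (ξ i) (-(lam * α i)) < ⊤) →
      -dualObj x φ ξ lam α ≤ primalObj x φ ξ lam θ := by
    intro θ α hα
    by_cases htop : ∀ i, ξ i ⟪θ, φ (x i)⟫ ≠ ⊤
    · rw [hprimal_eq θ htop, hdual_eq α hα, ← EReal.coe_neg, EReal.coe_le_coe_iff]
      set w : EuclideanSpace ℝ (Fin D) := ∑ i, α i • φ (x i) with hw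
      set A : ℝ := ∑ i, (ξ i ⟪θ, φ (x i)⟫).toReal with hA
      set B : ℝ := ∑ i, (fenchelConj (ξ i) (-(lam * α i))).toReal with hB
      have hsum : ∑ i, (⟪θ, φ (x i)⟫ * (-(lam * α i))) ≤ A + B := by
        rw [hA, hB, ← Finset.sum_add_distrib]
        refine Finset.sum_le_sum fun i _ => ?_
        exact fenchelYoung_real (ξ i)
          (EReal.coe_toReal (htop i) (hξ_noBot i _)).symm
          (EReal.coe_toReal (hα i).ne (hconj_ne_bot α i)).symm
      have hsum2 : ∑ i, (⟪θ, φ (x i)⟫ * (-(lam * α i))) = -lam * ⟪θ, w⟫ := by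
        rw [hip θ α, Finset.mul_sum]
        exact Finset.sum_congr rfl fun i _ => by ring
      have h1 : -lam * ⟪θ, w⟫ ≤ A + B := hsum2 ▸ hsum
      have h2 : ((1:ℝ)/lam) * (-lam * ⟪θ, w⟫) ≤ ((1:ℝ)/lam) * (A + B) :=
        mul_le_mul_of_nonneg_left h1 (by positivity)
      have h3 : ((1:ℝ)/lam) * (-lam * ⟪θ, w⟫) = -⟪θ, w⟫ := by
        field_simp
      have h4 : (0:ℝ) ≤ ‖θ - w‖^2 := sq_nonneg _
      have h5 : ‖θ - w‖^2 = ‖θ‖^2 - 2 * ⟪θ, w⟫ + ‖w‖^2 := norm_sub_sq_real θ w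
      have h6 : ‖w‖^2 = ∑ i, ∑ j, α i * ⟪φ (x i), φ (x j)⟫ * α j := hnorm α
      have h7 : ((1:ℝ)/lam) * (A + B) = ((1:ℝ)/lam) * A + ((1:ℝ)/lam) * B := by ring
      nlinarith [h2, h3, h4, h5, h6]
    · push_neg at htop
      obtain ⟨i0, hi0⟩ := htop
      have : primalObj x φ ξ lam θ = ⊤ := by
        unfold primalObj
        rw [ereal_sum_eq_top Finset.univ (fun i => ξ i ⟪θ, φ (x i)⟫) (fun i _ => hξ_noBot i _)
          (Finset.mem_univ i0) hi0, EReal.mul_top_of_pos, EReal.add_top_of_ne_bot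
          (EReal.coe_ne_bot _)]
        exact EReal.coe_pos.mpr (by positivity)
      rw [this]
      exact le_top
  -- loss terms at θ⋆ are finite
  have hξtop : ∀ i, ξ i ⟪θstar, φ (x i)⟫ ≠ ⊤ := by
    intro i h
    have h2 := hFY i
    rw [h, EReal.top_add_of_ne_bot (hconj_ne_bot αstar i)] at h2
    exact EReal.coe_ne_top _ h2.symm
  -- the strong duality equality
  have heq : primalObj x φ ξ lam θstar = -dualObj x φ ξ lam αstar := by
    rw [hprimal_eq θstar hξtop, hdual_eq αstar hfeas, ← EReal.coe_neg,
      EReal.coe_eq_coe_iff]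
    set A : ℝ := ∑ i, (ξ i ⟪θstar, φ (x i)⟫).toReal with hA
    set B : ℝ := ∑ i, (fenchelConj (ξ i) (-(lam * αstar i))).toReal with hB
    have hab : ∀ i, (ξ i ⟪θstar, φ (x i)⟫).toReal
        + (fenchelConj (ξ i) (-(lam * αstar i))).toReal
        = (-(lam * αstar i)) * ⟪θstar, φ (x i)⟫ := by
      intro i
      have h2 := hFY i
      rw [← EReal.coe_toReal (hξtop i) (hξ_noBot i _),
        ← EReal.coe_toReal (hfeas i).ne (hconj_ne_bot αstar i),
        ← EReal.coe_add, EReal.coe_eq_coe_iff] at h2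
      exact h2
    have hAB : A + B = -lam * ‖θstar‖^2 := by
      rw [hA, hB, ← Finset.sum_add_distrib, Finset.sum_congr rfl fun i _ => hab i]
      have : ∑ i, (-(lam * αstar i)) * ⟪θstar, φ (x i)⟫
          = -lam * ∑ i, αstar i * ⟪θstar, φ (x i)⟫ := by
        rw [Finset.mul_sum]
        exact Finset.sum_congr rfl fun i _ => by ring
      rw [this, ← hip θstar αstar, ← hθ, real_inner_self_eq_norm_sq]
    have h6 : ‖θstar‖^2 = ∑ i, ∑ j, αstar i * ⟪φ (x i), φ (x j)⟫ * αstar j := by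
      rw [hθ]; exact hnorm αstar
    have hl : ((1:ℝ)/lam) * (A + B) = -‖θstar‖^2 := by
      rw [hAB]; field_simp
    have hl2 : ((1:ℝ)/lam) * (A + B) = ((1:ℝ)/lam) * A + ((1:ℝ)/lam) * B := by ring
    linarith [hl, hl2]
  refine ⟨heq, fun θ => ?_, fun α hα => ?_⟩
  · rw [heq]
    exact weak θ αstar hfeas
  · have h := weak θstar α hα
    rw [heq] at h
    exact EReal.neg_le_neg_iff.mp h
end

section
/- Steihaug monotone-norm lemma underlying Algorithm 2: apply the conjugate gradient method to minimize μ(s) = (1/2)sᵀQs + gᵀs, where Q ∈ ℝ^{m×m} is symmetric positive definite and g ∈ ℝ^m, starting from s_0 = 0 with residuals r_k = −(Qs_k + g) and exact CG updates. Then as long as the residuals are nonzero, the Euclidean norms of the iterates are strictly increasing: ‖s_{k+1}‖ > ‖s_k‖ for each k. -/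
/-!
The residuals and search directions of exact CG satisfy, by a joint induction, `r_j ⬝ d_i = 0`
and `d_j ⬝ Q d_i = 0` for `i < j`; in particular `r_k ⬝ d_k = r_k ⬝ r_k > 0`, so `d_k ≠ 0` and
`ω_k > 0`. Since `s_k` is a combination of `d_0, …, d_{k-1}`, it is orthogonal to `r_k`, whence
`s_{k+1} ⬝ d_{k+1} = ν_k (s_k ⬝ d_k + ω_k ‖d_k‖²)` and inductively `s_k ⬝ d_k ≥ 0`. Then
`‖s_{k+1}‖² = ‖s_k‖² + 2 ω_k (s_k ⬝ d_k) + ω_k² ‖d_k‖² > ‖s_k‖²`.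
-/

open Matrix

variable {ι : Type*} [Fintype ι]

lemma Matrix.IsSymm.dotProduct_mulVec_comm {R : Type*} [CommSemiring R] {A : Matrix ι ι R}
    (hA : A.IsSymm) (x y : ι → R) : x ⬝ᵥ A *ᵥ y = y ⬝ᵥ A *ᵥ x := by
  rw [dotProduct_mulVec, ← mulVec_transpose, hA.eq, dotProduct_comm]

lemma dotProduct_self_nonneg (v : ι → ℝ) : 0 ≤ v ⬝ᵥ v := by
  simpa using dotProduct_star_self_nonneg v

lemma dotProduct_self_pos {v : ι → ℝ} (hv : v ≠ 0) : 0 < v ⬝ᵥ v := by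
  simpa using dotProduct_star_self_pos_iff.mpr hv

lemma dotProduct_self_lt_add_smul {x y : ι → ℝ} {t : ℝ} (hxy : 0 ≤ x ⬝ᵥ y) (ht : 0 < t)
    (hy : y ≠ 0) : x ⬝ᵥ x < (x + t • y) ⬝ᵥ (x + t • y) := by
  have hyy := dotProduct_self_pos hy
  simp only [add_dotProduct, dotProduct_add, smul_dotProduct, dotProduct_smul, smul_eq_mul,
    dotProduct_comm y x]
  nlinarith [mul_pos ht (mul_pos ht hyy), mul_nonneg ht.le hxy]

noncomputable def cgStepSize (Q : Matrix ι ι ℝ) (r d : ℕ → ι → ℝ) (k : ℕ) : ℝ :=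
  (r k ⬝ᵥ r k) / (d k ⬝ᵥ Q *ᵥ d k)

lemma cgStepSize_nonneg {Q : Matrix ι ι ℝ} (hQ : Q.PosSemidef) (r d : ℕ → ι → ℝ) (k : ℕ) :
    0 ≤ cgStepSize Q r d k :=
  div_nonneg (dotProduct_self_nonneg _) (by simpa using hQ.dotProduct_mulVec_nonneg (d k))

structure IsCGSequence (Q : Matrix ι ι ℝ) (s r d : ℕ → ι → ℝ) : Prop where
  s_zero : s 0 = 0
  d_zero : d 0 = r 0
  s_succ : ∀ k, s (k + 1) = s k + cgStepSize Q r d k • d k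
  r_succ : ∀ k, r (k + 1) = r k - cgStepSize Q r d k • Q *ᵥ d k
  d_succ : ∀ k, d (k + 1) = r (k + 1) + ((r (k + 1) ⬝ᵥ r (k + 1)) / (r k ⬝ᵥ r k)) • d k

namespace IsCGSequence

variable {Q : Matrix ι ι ℝ} {s r d : ℕ → ι → ℝ}

lemma dotProduct_r_succ (h : IsCGSequence Q s r d) (x : ι → ℝ) (k : ℕ) :
    x ⬝ᵥ r (k + 1) = x ⬝ᵥ r k - cgStepSize Q r d k * (x ⬝ᵥ Q *ᵥ d k) := by
  rw [h.r_succ, dotProduct_sub, dotProduct_smul, smul_eq_mul]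

lemma r_eq_d_sub (h : IsCGSequence Q s r d) (k : ℕ) :
    r (k + 1) = d (k + 1) - ((r (k + 1) ⬝ᵥ r (k + 1)) / (r k ⬝ᵥ r k)) • d k :=
  eq_sub_of_add_eq (h.d_succ k).symm

lemma r_dotProduct_d_self (h : IsCGSequence Q s r d) {k : ℕ}
    (hk : ∀ i < k, r k ⬝ᵥ d i = 0) : r k ⬝ᵥ d k = r k ⬝ᵥ r k := by
  cases k with
  | zero => rw [h.d_zero]
  | succ k =>
    rw [h.d_succ, dotProduct_add, dotProduct_smul, hk k k.lt_succ_self, smul_zero, add_zero]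

lemma d_ne_zero (h : IsCGSequence Q s r d) {k : ℕ} (hr : r k ≠ 0)
    (hk : ∀ i < k, r k ⬝ᵥ d i = 0) : d k ≠ 0 := by
  intro hd
  have hrd := h.r_dotProduct_d_self hk
  rw [hd, dotProduct_zero] at hrd
  exact (dotProduct_self_pos hr).ne hrd

lemma curvature_pos (h : IsCGSequence Q s r d) (hQ : Q.PosDef) {k : ℕ} (hr : r k ≠ 0)
    (hk : ∀ i < k, r k ⬝ᵥ d i = 0) : 0 < d k ⬝ᵥ Q *ᵥ d k := by
  simpa using hQ.dotProduct_mulVec_pos (h.d_ne_zero hr hk)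

lemma cgStepSize_pos (h : IsCGSequence Q s r d) (hQ : Q.PosDef) {k : ℕ} (hr : r k ≠ 0)
    (hk : ∀ i < k, r k ⬝ᵥ d i = 0) : 0 < cgStepSize Q r d k :=
  div_pos (dotProduct_self_pos hr) (h.curvature_pos hQ hr hk)

lemma cgStepSize_mul_curvature (h : IsCGSequence Q s r d) (hQ : Q.PosDef) {k : ℕ}
    (hr : r k ≠ 0) (hk : ∀ i < k, r k ⬝ᵥ d i = 0) :
    cgStepSize Q r d k * (d k ⬝ᵥ Q *ᵥ d k) = r k ⬝ᵥ r k :=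
  div_mul_cancel₀ _ (h.curvature_pos hQ hr hk).ne'

lemma r_succ_dotProduct_d (h : IsCGSequence Q s r d) (hQ : Q.PosDef) {n : ℕ} (hr : r n ≠ 0)
    (hrd : ∀ i < n, r n ⬝ᵥ d i = 0) (hdQd : ∀ i < n, d n ⬝ᵥ Q *ᵥ d i = 0) :
    ∀ i ≤ n, r (n + 1) ⬝ᵥ d i = 0 := by
  intro i hi
  rw [dotProduct_comm, h.dotProduct_r_succ,
    (isHermitian_iff_isSymm.mp hQ.isHermitian).dotProduct_mulVec_comm, dotProduct_comm]
  rcases hi.lt_or_eq with hi | rfl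
  · rw [hrd i hi, hdQd i hi, mul_zero, sub_zero]
  · rw [h.r_dotProduct_d_self hrd, h.cgStepSize_mul_curvature hQ hr hrd, sub_self]

lemma r_dotProduct_r_eq_zero (h : IsCGSequence Q s r d) {j n : ℕ}
    (hj : ∀ i ≤ n, r j ⬝ᵥ d i = 0) : ∀ i ≤ n, r j ⬝ᵥ r i = 0 := by
  rintro (_ | i) hi
  · rw [← h.d_zero, hj 0 hi]
  · rw [h.r_eq_d_sub, dotProduct_sub, dotProduct_smul, hj (i + 1) hi, hj i (by omega),
      smul_zero, sub_zero]

lemma d_succ_dotProduct_mulVec_d (h : IsCGSequence Q s r d) (hQ : Q.PosDef) {n : ℕ}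
    (hr : ∀ j ≤ n, r j ≠ 0) (hrd : ∀ j ≤ n, ∀ i < j, r j ⬝ᵥ d i = 0)
    (hdQd : ∀ i < n, d n ⬝ᵥ Q *ᵥ d i = 0) (hrd' : ∀ i ≤ n, r (n + 1) ⬝ᵥ d i = 0) :
    ∀ i ≤ n, d (n + 1) ⬝ᵥ Q *ᵥ d i = 0 := by
  intro i hi
  have hrr := h.r_dotProduct_r_eq_zero hrd'
  have hω := h.cgStepSize_pos hQ (hr i hi) (hrd i hi)
  have key := h.dotProduct_r_succ (r (n + 1)) i
  rw [h.d_succ, add_dotProduct, smul_dotProduct, smul_eq_mul]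
  rcases hi.lt_or_eq with hi | rfl
  · rw [hdQd i hi, mul_zero, add_zero]
    rw [hrr i hi.le, hrr (i + 1) hi, zero_sub, zero_eq_neg] at key
    exact (mul_eq_zero.mp key).resolve_left hω.ne'
  · rw [hrr i le_rfl, zero_sub] at key
    apply mul_left_cancel₀ hω.ne'
    calc cgStepSize Q r d i * (r (i + 1) ⬝ᵥ Q *ᵥ d i
          + (r (i + 1) ⬝ᵥ r (i + 1)) / (r i ⬝ᵥ r i) * (d i ⬝ᵥ Q *ᵥ d i))
        = cgStepSize Q r d i * (r (i + 1) ⬝ᵥ Q *ᵥ d i)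
          + (r (i + 1) ⬝ᵥ r (i + 1)) / (r i ⬝ᵥ r i)
            * (cgStepSize Q r d i * (d i ⬝ᵥ Q *ᵥ d i)) := by ring
      _ = cgStepSize Q r d i * (r (i + 1) ⬝ᵥ Q *ᵥ d i) + r (i + 1) ⬝ᵥ r (i + 1) := by
        rw [h.cgStepSize_mul_curvature hQ (hr i le_rfl) (hrd i le_rfl),
          div_mul_cancel₀ _ (dotProduct_self_pos (hr i le_rfl)).ne']
      _ = cgStepSize Q r d i * 0 := by linarith

lemma orthogonal_and_conjugate (h : IsCGSequence Q s r d) (hQ : Q.PosDef) {n : ℕ}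
    (hr : ∀ j < n, r j ≠ 0) : ∀ j ≤ n, ∀ i < j, r j ⬝ᵥ d i = 0 ∧ d j ⬝ᵥ Q *ᵥ d i = 0 := by
  induction n with
  | zero => intro j hj i hi; omega
  | succ n ih =>
    have ih := ih fun j hj => hr j (by omega)
    have hr' : ∀ j ≤ n, r j ≠ 0 := fun j hj => hr j (by omega)
    have hrd : ∀ j ≤ n, ∀ i < j, r j ⬝ᵥ d i = 0 := fun j hj i hi => (ih j hj i hi).1
    have hdQd : ∀ i < n, d n ⬝ᵥ Q *ᵥ d i = 0 := fun i hi => (ih n le_rfl i hi).2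
    have hrd' := h.r_succ_dotProduct_d hQ (hr' n le_rfl) (hrd n le_rfl) hdQd
    have hdQd' := h.d_succ_dotProduct_mulVec_d hQ hr' hrd hdQd hrd'
    intro j hj i hi
    rcases hj.lt_or_eq with hj | rfl
    · exact ih j (by omega) i hi
    · exact ⟨hrd' i (by omega), hdQd' i (by omega)⟩

lemma s_dotProduct_r_eq_zero (h : IsCGSequence Q s r d) {k : ℕ}
    (hk : ∀ i < k, r k ⬝ᵥ d i = 0) : ∀ j ≤ k, s j ⬝ᵥ r k = 0 := by
  intro j hj
  induction j with
  | zero => rw [h.s_zero, zero_dotProduct]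
  | succ j ih =>
    rw [h.s_succ, add_dotProduct, smul_dotProduct, ih (by omega), dotProduct_comm, hk j hj,
      smul_zero, add_zero]

lemma s_dotProduct_d_nonneg (h : IsCGSequence Q s r d) (hQ : Q.PosSemidef) {k : ℕ}
    (hk : ∀ j ≤ k, s j ⬝ᵥ r j = 0) : 0 ≤ s k ⬝ᵥ d k := by
  induction k with
  | zero => rw [h.s_zero, zero_dotProduct]
  | succ k ih =>
    have hsd : 0 ≤ s (k + 1) ⬝ᵥ d k := by
      rw [h.s_succ, add_dotProduct, smul_dotProduct, smul_eq_mul]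
      exact add_nonneg (ih fun j hj => hk j (by omega))
        (mul_nonneg (cgStepSize_nonneg hQ r d k) (dotProduct_self_nonneg _))
    rw [h.d_succ, dotProduct_add, hk (k + 1) le_rfl, zero_add, dotProduct_smul, smul_eq_mul]
    exact mul_nonneg (div_nonneg (dotProduct_self_nonneg _) (dotProduct_self_nonneg _)) hsd

end IsCGSequence

theorem cg_steihaug_norm_strict_mono_general {m : ℕ}
    (Q : Matrix (Fin m) (Fin m) ℝ) (hQpd : Q.PosDef)
    (g : Fin m → ℝ)
    (s r d : ℕ → (Fin m → ℝ))
    (hs0 : s 0 = 0) (hr0 : r 0 = -g) (hd0 : d 0 = -g)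
    (hs : ∀ k, s (k + 1) = s k + ((r k ⬝ᵥ r k) / (d k ⬝ᵥ Q.mulVec (d k))) • d k)
    (hr : ∀ k, r (k + 1) = r k - ((r k ⬝ᵥ r k) / (d k ⬝ᵥ Q.mulVec (d k))) • Q.mulVec (d k))
    (hd : ∀ k, d (k + 1) = r (k + 1) + ((r (k + 1) ⬝ᵥ r (k + 1)) / (r k ⬝ᵥ r k)) • d k) :
    ∀ k : ℕ, (∀ j ≤ k, r j ≠ 0) →
      Real.sqrt (s k ⬝ᵥ s k) < Real.sqrt (s (k + 1) ⬝ᵥ s (k + 1)) := by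
  intro k hne
  have hcg : IsCGSequence Q s r d := ⟨hs0, hd0.trans hr0.symm, hs, hr, hd⟩
  have hrd : ∀ j ≤ k, ∀ i < j, r j ⬝ᵥ d i = 0 := fun j hj i hi =>
    (hcg.orthogonal_and_conjugate hQpd (fun j' hj' => hne j' hj'.le) j hj i hi).1
  have hsd : 0 ≤ s k ⬝ᵥ d k := hcg.s_dotProduct_d_nonneg hQpd.posSemidef fun j hj =>
    hcg.s_dotProduct_r_eq_zero (hrd j hj) j le_rfl
  rw [hs k]
  exact Real.sqrt_lt_sqrt (dotProduct_self_nonneg _) <| dotProduct_self_lt_add_smul hsd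
    (hcg.cgStepSize_pos hQpd (hne k le_rfl) (hrd k le_rfl))
    (hcg.d_ne_zero (hne k le_rfl) (hrd k le_rfl))

/-- Steihaug monotone-norm lemma: in the conjugate gradient method applied to
`μ(s) = (1/2)sᵀQs + gᵀs` with `Q` symmetric positive definite, started from `s₀ = 0`
with `r₀ = d₀ = -g` and the exact CG updates, the Euclidean norms of the iterates are
strictly increasing as long as the residuals are nonzero. -/
theorem cg_steihaug_norm_strict_mono {m : ℕ}
    (Q : Matrix (Fin m) (Fin m) ℝ) (hQsymm : Q.IsHermitian) (hQpd : Q.PosDef)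
    (g : Fin m → ℝ)
    (s r d : ℕ → (Fin m → ℝ))
    (hs0 : s 0 = 0) (hr0 : r 0 = -g) (hd0 : d 0 = -g)
    (hs : ∀ k, s (k + 1) = s k + ((r k ⬝ᵥ r k) / (d k ⬝ᵥ Q.mulVec (d k))) • d k)
    (hr : ∀ k, r (k + 1) = r k - ((r k ⬝ᵥ r k) / (d k ⬝ᵥ Q.mulVec (d k))) • Q.mulVec (d k))
    (hd : ∀ k, d (k + 1) = r (k + 1) + ((r (k + 1) ⬝ᵥ r (k + 1)) / (r k ⬝ᵥ r k)) • d k) :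
    ∀ k : ℕ, (∀ j ≤ k, r j ≠ 0) →
      Real.sqrt (s k ⬝ᵥ s k) < Real.sqrt (s (k + 1) ⬝ᵥ s (k + 1)) :=
  cg_steihaug_norm_strict_mono_general Q hQpd g s r d hs0 hr0 hd0 hs hr hd
end
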